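/- arXiv:1610.00358 — 5 statements merged into one kernel-verified Lean document; each statement's English description precedes it below -/
import Mathlib

section
/- Let (D, σ) be a measure space with σ(D) < ∞, let C > 0 and β > 0, let (λ_j)_{j≥1} be a nondecreasing sequence of real numbers, and let (m_j)_{j≥1} be measurable functions m_j : D → ℝ with ∫_D m_j² dσ = 1 for every j. Assume that for every t > 0 and σ-almost every θ ∈ D the series Σ_{j=1}^∞ e^{-λ_j t} m_j(θ)² converges and satisfies Σ_{j=1}^∞ e^{-λ_j t} m_j(θ)² ≤ C t^{-β}. Then every λ_j is strictly positive and satisfies j ≤ e·C·σ(D)·λ_j^β; equivalently, λ_j ≥ (e C σ(D))^{-1/β} j^{1/β} for every j ≥ 1. -/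
open MeasureTheory Real
open scoped ENNReal

private lemma lmono_trans (l : ℕ → ℝ) (hmono : ∀ j : ℕ, 1 ≤ j → l j ≤ l (j + 1)) :
    ∀ a b : ℕ, 1 ≤ a → a ≤ b → l a ≤ l b := by
  intro a b ha hab
  induction b with
  | zero => omega
  | succ n ih =>
    rcases Nat.lt_or_ge a (n+1) with h | h
    · exact le_trans (ih (by omega)) (hmono n (by omega))
    · have : a = n + 1 := by omega
      simp [this]

/-- Eigenvalue lower bound: if the L²-normalized functions `m j` and nondecreasing
reals `l j` satisfy the diagonal heat-kernel bound
`∑' j, exp(-l j * t) * (m j θ)² ≤ C * t^(-β)` for a.e. `θ` and all `t > 0`,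
then every `l j` is positive and `j ≤ e * C * σ(D) * (l j)^β`, equivalently
`l j ≥ (e * C * σ(D))^(-1/β) * j^(1/β)`. -/
theorem stmt0
    {D : Type*} [MeasurableSpace D] (σ : Measure D) [IsFiniteMeasure σ]
    (C β : ℝ) (hC : 0 < C) (hβ : 0 < β)
    (l : ℕ → ℝ) (hmono : ∀ j : ℕ, 1 ≤ j → l j ≤ l (j + 1))
    (m : ℕ → D → ℝ) (hmeas : ∀ j : ℕ, 1 ≤ j → Measurable (m j))
    (hnorm : ∀ j : ℕ, 1 ≤ j → ∫ θ, (m j θ) ^ 2 ∂σ = 1)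
    (hbound : ∀ t : ℝ, 0 < t →
      ∀ᵐ θ ∂σ,
        Summable (fun j : ℕ => Real.exp (-(l (j + 1)) * t) * (m (j + 1) θ) ^ 2) ∧
        (∑' j : ℕ, Real.exp (-(l (j + 1)) * t) * (m (j + 1) θ) ^ 2) ≤ C * t ^ (-β)) :
    ∀ j : ℕ, 1 ≤ j →
      0 < l j ∧
      (j : ℝ) ≤ Real.exp 1 * C * (σ Set.univ).toReal * (l j) ^ β ∧
      (Real.exp 1 * C * (σ Set.univ).toReal) ^ (-(1 / β)) * (j : ℝ) ^ (1 / β) ≤ l j := by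
  set S : ℝ := (σ Set.univ).toReal with hS
  -- positivity of S
  have hσ0 : σ Set.univ ≠ 0 := by
    intro h
    have hz : σ = 0 := by rwa [Measure.measure_univ_eq_zero] at h
    have := hnorm 1 le_rfl
    rw [hz] at this
    simp at this
  have hSpos : 0 < S := ENNReal.toReal_pos hσ0 (measure_ne_top σ _)
  -- the key inequality : j * exp(-(l j) t) ≤ C t^(-β) * S
  have key : ∀ t : ℝ, 0 < t → ∀ j : ℕ, 1 ≤ j →
      (j : ℝ) * Real.exp (-(l j) * t) ≤ C * t ^ (-β) * S := by
    intro t ht j hj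
    -- integral computation in ENNReal
    have hint : ∀ k : ℕ,
        ∫⁻ θ, ENNReal.ofReal (Real.exp (-(l (k+1)) * t) * (m (k+1) θ) ^ 2) ∂σ
          = ENNReal.ofReal (Real.exp (-(l (k+1)) * t)) := by
      intro k
      have hInt : Integrable (fun θ => (m (k+1) θ) ^ 2) σ := by
        by_contra h
        have := integral_undef h
        rw [hnorm (k+1) (by omega)] at this
        norm_num at this
      calc ∫⁻ θ, ENNReal.ofReal (Real.exp (-(l (k+1)) * t) * (m (k+1) θ) ^ 2) ∂σ
          = ∫⁻ θ, ENNReal.ofReal (Real.exp (-(l (k+1)) * t))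
              * ENNReal.ofReal ((m (k+1) θ) ^ 2) ∂σ := by
            congr 1; funext θ
            rw [ENNReal.ofReal_mul (Real.exp_nonneg _)]
        _ = ENNReal.ofReal (Real.exp (-(l (k+1)) * t))
              * ∫⁻ θ, ENNReal.ofReal ((m (k+1) θ) ^ 2) ∂σ := by
            rw [lintegral_const_mul]
            exact ((hmeas (k+1) (by omega)).pow measurable_const).ennreal_ofReal
        _ = ENNReal.ofReal (Real.exp (-(l (k+1)) * t)) * ENNReal.ofReal 1 := by
            rw [← ofReal_integral_eq_lintegral_ofReal hInt
              (Filter.Eventually.of_forall (fun θ => sq_nonneg _)), hnorm (k+1) (by omega)]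
        _ = ENNReal.ofReal (Real.exp (-(l (k+1)) * t)) := by simp
    have hsum : (∑' k : ℕ, ENNReal.ofReal (Real.exp (-(l (k+1)) * t)))
        ≤ ENNReal.ofReal (C * t ^ (-β)) * σ Set.univ := by
      calc (∑' k : ℕ, ENNReal.ofReal (Real.exp (-(l (k+1)) * t)))
          = ∑' k : ℕ, ∫⁻ θ, ENNReal.ofReal
              (Real.exp (-(l (k+1)) * t) * (m (k+1) θ) ^ 2) ∂σ := by
            simp_rw [hint]
        _ = ∫⁻ θ, ∑' k : ℕ, ENNReal.ofReal
              (Real.exp (-(l (k+1)) * t) * (m (k+1) θ) ^ 2) ∂σ := by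
            refine (lintegral_tsum (fun k => ?_)).symm
            exact (((hmeas (k+1) (by omega)).pow measurable_const).const_mul
              _).ennreal_ofReal.aemeasurable
        _ ≤ ∫⁻ _, ENNReal.ofReal (C * t ^ (-β)) ∂σ := by
            refine lintegral_mono_ae ?_
            filter_upwards [hbound t ht] with θ hθ
            obtain ⟨hsummable, hle⟩ := hθ
            rw [← ENNReal.ofReal_tsum_of_nonneg
              (fun k => mul_nonneg (Real.exp_nonneg _) (sq_nonneg _)) hsummable]
            exact ENNReal.ofReal_le_ofReal hle
        _ = ENNReal.ofReal (C * t ^ (-β)) * σ Set.univ := by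
            rw [lintegral_const]
    -- partial sum bound
    have hpart : (j : ℝ≥0∞) * ENNReal.ofReal (Real.exp (-(l j) * t))
        ≤ ENNReal.ofReal (C * t ^ (-β)) * σ Set.univ := by
      refine le_trans ?_ hsum
      have : ∀ k ∈ Finset.range j, ENNReal.ofReal (Real.exp (-(l j) * t))
          ≤ ENNReal.ofReal (Real.exp (-(l (k+1)) * t)) := by
        intro k hk
        refine ENNReal.ofReal_le_ofReal (Real.exp_le_exp.2 ?_)
        have : l (k+1) ≤ l j := lmono_trans l hmono (k+1) j (by omega)
          (Finset.mem_range.1 hk)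
        nlinarith
      calc (j : ℝ≥0∞) * ENNReal.ofReal (Real.exp (-(l j) * t))
          = ∑ _k ∈ Finset.range j, ENNReal.ofReal (Real.exp (-(l j) * t)) := by
            simp [Finset.sum_const, mul_comm]
        _ ≤ ∑ k ∈ Finset.range j, ENNReal.ofReal (Real.exp (-(l (k+1)) * t)) :=
            Finset.sum_le_sum this
        _ ≤ ∑' k : ℕ, ENNReal.ofReal (Real.exp (-(l (k+1)) * t)) :=
            ENNReal.sum_le_tsum _
    -- convert to reals
    have hRHS : (ENNReal.ofReal (C * t ^ (-β)) * σ Set.univ).toReal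
        = C * t ^ (-β) * S := by
      rw [ENNReal.toReal_mul, ENNReal.toReal_ofReal
        (mul_nonneg hC.le (Real.rpow_nonneg ht.le _))]
    have hLHS : ((j : ℝ≥0∞) * ENNReal.ofReal (Real.exp (-(l j) * t))).toReal
        = (j : ℝ) * Real.exp (-(l j) * t) := by
      rw [ENNReal.toReal_mul, ENNReal.toReal_ofReal (Real.exp_nonneg _)]
      simp
    rw [← hRHS, ← hLHS]
    exact ENNReal.toReal_mono
      (ENNReal.mul_ne_top ENNReal.ofReal_ne_top (measure_ne_top σ _)) hpart
  intro j hj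
  -- positivity of l j
  have hlpos : 0 < l j := by
    by_contra h
    push_neg at h
    set t0 : ℝ := (2 * C * S) ^ β⁻¹ with ht0
    have ht0pos : 0 < t0 := Real.rpow_pos_of_pos (by positivity) _
    have h1 := key t0 ht0pos j hj
    have hexp : (1 : ℝ) ≤ Real.exp (-(l j) * t0) := by
      rw [← Real.exp_zero]
      exact Real.exp_le_exp.2 (by nlinarith)
    have ht0β : t0 ^ (-β) = (2 * C * S)⁻¹ := by
      rw [Real.rpow_neg ht0pos.le, ht0, Real.rpow_inv_rpow (by positivity) hβ.ne']
    rw [ht0β] at h1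
    have hj1 : (1 : ℝ) ≤ (j : ℝ) := by exact_mod_cast hj
    have : C * (2 * C * S)⁻¹ * S = 1 / 2 := by
      field_simp
    nlinarith [mul_le_mul_of_nonneg_left hexp (le_trans zero_le_one hj1)]
  refine ⟨hlpos, ?_, ?_⟩
  · -- main bound, take t = 1 / l j
    have h1 := key (l j)⁻¹ (inv_pos.2 hlpos) j hj
    have hexp : Real.exp (-(l j) * (l j)⁻¹) = (Real.exp 1)⁻¹ := by
      rw [neg_mul, mul_inv_cancel₀ hlpos.ne', Real.exp_neg]
    have htβ : ((l j)⁻¹ : ℝ) ^ (-β) = (l j) ^ β := by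
      rw [← Real.rpow_neg_one (l j), ← Real.rpow_mul hlpos.le]
      norm_num
    rw [hexp, htβ] at h1
    have hepos : (0 : ℝ) < Real.exp 1 := Real.exp_pos 1
    calc (j : ℝ) = (j : ℝ) * (Real.exp 1)⁻¹ * Real.exp 1 := by
          field_simp
      _ ≤ C * l j ^ β * S * Real.exp 1 :=
          mul_le_mul_of_nonneg_right h1 hepos.le
      _ = Real.exp 1 * C * S * l j ^ β := by ring
  · -- equivalent formulation
    have hA : (0 : ℝ) < Real.exp 1 * C * S := by positivity
    have h2 : (j : ℝ) ≤ Real.exp 1 * C * S * (l j) ^ β := by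
      have h1 := key (l j)⁻¹ (inv_pos.2 hlpos) j hj
      have hexp : Real.exp (-(l j) * (l j)⁻¹) = (Real.exp 1)⁻¹ := by
        rw [neg_mul, mul_inv_cancel₀ hlpos.ne', Real.exp_neg]
      have htβ : ((l j)⁻¹ : ℝ) ^ (-β) = (l j) ^ β := by
        rw [← Real.rpow_neg_one (l j), ← Real.rpow_mul hlpos.le]
        norm_num
      rw [hexp, htβ] at h1
      have hepos : (0 : ℝ) < Real.exp 1 := Real.exp_pos 1
      calc (j : ℝ) = (j : ℝ) * (Real.exp 1)⁻¹ * Real.exp 1 := by field_simp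
        _ ≤ C * l j ^ β * S * Real.exp 1 := mul_le_mul_of_nonneg_right h1 hepos.le
        _ = Real.exp 1 * C * S * l j ^ β := by ring
    have hdiv : (j : ℝ) / (Real.exp 1 * C * S) ≤ (l j) ^ β := by
      rw [div_le_iff₀ hA]
      linarith [h2, mul_comm (Real.exp 1 * C * S) ((l j) ^ β)]
    have hrpow : ((j : ℝ) / (Real.exp 1 * C * S)) ^ (1/β) ≤ ((l j) ^ β) ^ (1/β) :=
      Real.rpow_le_rpow (by positivity) hdiv (by positivity)
    have heq1 : ((l j) ^ β) ^ (1/β) = l j := by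
      rw [one_div, Real.rpow_rpow_inv hlpos.le hβ.ne']
    have heq2 : ((j : ℝ) / (Real.exp 1 * C * S)) ^ (1/β)
        = (Real.exp 1 * C * S) ^ (-(1/β)) * (j : ℝ) ^ (1/β) := by
      rw [div_eq_mul_inv, Real.mul_rpow (by positivity) (by positivity),
        ← Real.rpow_neg_one (Real.exp 1 * C * S), ← Real.rpow_mul hA.le]
      ring_nf
    rw [heq1, heq2] at hrpow
    exact hrpow
end

section
/- Let (D, σ) be a measure space with σ(D) < ∞ and let C > 0, β > 0, λ > 0. Let q : (0,∞) × D × D → ℝ be such that for every t > 0 and θ ∈ D the function η ↦ q(t,θ,η) is measurable and |q(t,θ,η)| ≤ C t^{-β} for all t > 0 and θ, η ∈ D. Let m : D → ℝ be measurable with ∫_D m² dσ = 1, and suppose that for every t > 0 and every θ ∈ D one has m(θ) = e^{λ t} ∫_D q(t,θ,η) m(η) dσ(η). Then sup_{θ ∈ D} |m(θ)| ≤ e · C · σ(D)^{1/2} · λ^β. -/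
open MeasureTheory Real

/-!
Evaluate the eigenfunction identity at the single time `t = 1 / λ`, where `e^{λ t} = e` and
`t^{-β} = λ^β`. The kernel bound then gives `|m θ| ≤ e C λ^β ∫ |m| dσ`, and Cauchy–Schwarz
against the constant `1` gives `∫ |m| dσ ≤ σ(D)^{1/2} (∫ m² dσ)^{1/2} = σ(D)^{1/2}`.
-/

section

variable {α : Type*} [MeasurableSpace α] {μ : Measure α}

theorem integral_abs_le_sqrt_measure_mul_sqrt_integral_sq [IsFiniteMeasure μ] {f : α → ℝ}
    (hf : MemLp f 2 μ) :
    ∫ x, |f x| ∂μ ≤ μ.real Set.univ ^ ((1 : ℝ) / 2) * (∫ x, f x ^ 2 ∂μ) ^ ((1 : ℝ) / 2) := by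
  have hconj : HolderConjugate 2 2 := by
    rw [holderConjugate_iff_eq_conjExponent] <;> norm_num
  have hone : MemLp (fun _ : α => (1 : ℝ)) (ENNReal.ofReal 2) μ := by
    simpa using memLp_const (μ := μ) (1 : ℝ)
  have habs : MemLp (fun x => |f x|) (ENNReal.ofReal 2) μ := by
    simpa [Real.norm_eq_abs] using hf.norm
  have holder := integral_mul_le_Lp_mul_Lq_of_nonneg hconj
    (.of_forall fun _ => zero_le_one) (.of_forall fun x => abs_nonneg (f x)) hone habs
  have hsq : ∀ x, |f x| ^ (2 : ℝ) = f x ^ 2 := fun x => by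
    rw [rpow_two, sq_abs]
  simpa [hsq] using holder

theorem abs_integral_mul_le_of_abs_le {k g : α → ℝ} {B : ℝ} (hg : Integrable g μ)
    (hk : ∀ x, |k x| ≤ B) :
    |∫ x, k x * g x ∂μ| ≤ B * ∫ x, |g x| ∂μ := by
  rw [← integral_const_mul, ← Real.norm_eq_abs]
  refine norm_integral_le_of_norm_le (hg.abs.const_mul B) (.of_forall fun x => ?_)
  rw [norm_mul, Real.norm_eq_abs, Real.norm_eq_abs]
  exact mul_le_mul_of_nonneg_right (hk x) (abs_nonneg _)

end

theorem stmt1_general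
    {D : Type*} [MeasurableSpace D] (σ : Measure D) [IsFiniteMeasure σ]
    (C β lam : ℝ) (hlam : 0 < lam)
    (q : ℝ → D → D → ℝ)
    (hqbound : ∀ t : ℝ, 0 < t → ∀ θ η : D, |q t θ η| ≤ C * t ^ (-β))
    (m : D → ℝ) (hm : Measurable m)
    (hnorm : ∫ θ, (m θ) ^ 2 ∂σ = 1)
    (heigen : ∀ t : ℝ, 0 < t → ∀ θ : D,
      m θ = Real.exp (lam * t) * ∫ η, q t θ η * m η ∂σ) :
    ∀ θ : D, |m θ| ≤ Real.exp 1 * C * ((σ Set.univ).toReal) ^ ((1 : ℝ) / 2) * lam ^ β := by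
  intro θ
  have hm2 : MemLp m 2 σ :=
    (memLp_two_iff_integrable_sq hm.aestronglyMeasurable).2 (integrable_of_integral_eq_one hnorm)
  have ht : 0 < lam⁻¹ := inv_pos.2 hlam
  have htβ : lam⁻¹ ^ (-β) = lam ^ β := by
    rw [inv_rpow hlam.le, rpow_neg hlam.le, inv_inv]
  have hCpow : 0 ≤ C * lam ^ β := htβ ▸ (abs_nonneg _).trans (hqbound _ ht θ θ)
  have hCS := integral_abs_le_sqrt_measure_mul_sqrt_integral_sq hm2
  rw [hnorm, one_rpow, mul_one] at hCS
  calc |m θ| = exp 1 * |∫ η, q lam⁻¹ θ η * m η ∂σ| := by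
        rw [heigen _ ht θ, mul_inv_cancel₀ hlam.ne', abs_mul, abs_of_pos (exp_pos 1)]
    _ ≤ exp 1 * (C * lam ^ β * ∫ η, |m η| ∂σ) := by
        gcongr
        exact abs_integral_mul_le_of_abs_le (hm2.integrable one_le_two) fun η =>
          htβ ▸ hqbound _ ht θ η
    _ ≤ exp 1 * (C * lam ^ β * σ.real Set.univ ^ ((1 : ℝ) / 2)) := by gcongr
    _ = exp 1 * C * ((σ Set.univ).toReal) ^ ((1 : ℝ) / 2) * lam ^ β := by
        rw [measureReal_def]; ring

/-- Eigenfunction sup-norm bound: if `m` is L²(σ)-normalized and satisfies the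
eigenfunction identity `m θ = e^{λ t} ∫ q(t,θ,η) m(η) dσ(η)` for all `t > 0`,
where the kernel `q` satisfies `|q(t,θ,η)| ≤ C t^{-β}`, then
`|m(θ)| ≤ e · C · σ(D)^{1/2} · λ^β` for every `θ`. -/
theorem stmt1
    {D : Type*} [MeasurableSpace D] (σ : Measure D) [IsFiniteMeasure σ]
    (C β lam : ℝ) (hC : 0 < C) (hβ : 0 < β) (hlam : 0 < lam)
    (q : ℝ → D → D → ℝ)
    (hqmeas : ∀ t : ℝ, 0 < t → ∀ θ : D, Measurable (fun η => q t θ η))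
    (hqbound : ∀ t : ℝ, 0 < t → ∀ θ η : D, |q t θ η| ≤ C * t ^ (-β))
    (m : D → ℝ) (hm : Measurable m)
    (hnorm : ∫ θ, (m θ) ^ 2 ∂σ = 1)
    (heigen : ∀ t : ℝ, 0 < t → ∀ θ : D,
      m θ = Real.exp (lam * t) * ∫ η, q t θ η * m η ∂σ) :
    ∀ θ : D, |m θ| ≤ Real.exp 1 * C * ((σ Set.univ).toReal) ^ ((1 : ℝ) / 2) * lam ^ β :=
  stmt1_general σ C β lam hlam q hqbound m hm hnorm heigen
end

section
/- Let (Ω, 𝓕, P) be a probability space, let α > 0, κ₀ ≥ 1, c ≥ 0 and λ > c. Let ξ : [0,∞) × Ω → ℝ be a jointly measurable stochastic process such that E[exp(α κ₀ ξ_s)] = exp(s c) for every s ≥ 0, and let T : Ω → [0, ∞) be an exponentially distributed random variable with rate λ such that T and ξ_s are independent for each fixed s ≥ 0. Then E[(∫₀^T exp(α ξ_s) ds)^{κ₀}] ≤ λ Γ(κ₀ + 1) / (λ − c)^{κ₀ + 1}, and consequently, for every t > 0, P(∫₀^T exp(α ξ_s) ds > t) ≤ λ Γ(κ₀ + 1)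 (λ − c)^{−(κ₀+1)} t^{−κ₀}. -/
open MeasureTheory ProbabilityTheory Set
open scoped ENNReal

lemma aux_jensen {u κ : ℝ} {g : ℝ → ℝ≥0∞} (hg : Measurable g) (hκ : 1 ≤ κ) :
    (∫⁻ s in Ioc 0 u, g s) ^ κ ≤ ENNReal.ofReal u ^ (κ - 1) * ∫⁻ s in Ioc 0 u, g s ^ κ := by
  rcases eq_or_lt_of_le hκ with h1 | h1
  · simp [← h1]
  have hκ0 : (0:ℝ) < κ := by linarith
  have hpq : κ.HolderConjugate (κ / (κ - 1)) :=
    (Real.holderConjugate_iff_eq_conjExponent h1).2 rfl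
  have hH := ENNReal.lintegral_mul_le_Lp_mul_Lq (volume.restrict (Ioc 0 u)) hpq
    hg.aemeasurable (aemeasurable_const : AEMeasurable (fun _ : ℝ => (1:ℝ≥0∞)) _)
  simp only [Pi.mul_apply, Pi.one_apply, mul_one, ENNReal.one_rpow, lintegral_const,
    Measure.restrict_apply, MeasurableSet.univ, univ_inter, Real.volume_Ioc, sub_zero,
    one_mul] at hH
  have key : (∫⁻ s in Ioc 0 u, g s) ^ κ
      ≤ ((∫⁻ s in Ioc 0 u, g s ^ κ) ^ (1/κ) * ENNReal.ofReal u ^ (1/(κ/(κ-1)))) ^ κ :=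
    ENNReal.rpow_le_rpow hH hκ0.le
  refine key.trans_eq ?_
  rw [ENNReal.mul_rpow_of_nonneg _ _ hκ0.le, ← ENNReal.rpow_mul, ← ENNReal.rpow_mul,
    one_div_mul_cancel hκ0.ne', ENNReal.rpow_one]
  rw [mul_comm]
  congr 1
  congr 1
  field_simp

lemma aux_ftc {κ c u : ℝ} (hκ : 1 ≤ κ) (hu : 0 ≤ u) :
    u ^ κ * Real.exp (c * u)
      = ∫ s in (0:ℝ)..u, (κ * s ^ (κ - 1) + c * s ^ κ) * Real.exp (c * s) := by
  have hder : ∀ x ∈ uIcc (0:ℝ) u,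
      HasDerivAt (fun s : ℝ => s ^ κ * Real.exp (c * s))
        ((κ * x ^ (κ - 1) + c * x ^ κ) * Real.exp (c * x)) x := by
    intro x _
    have h1 : HasDerivAt (fun s : ℝ => s ^ κ) (κ * x ^ (κ - 1)) x :=
      Real.hasDerivAt_rpow_const (Or.inr hκ)
    have h2 : HasDerivAt (fun s : ℝ => Real.exp (c * s)) (Real.exp (c * x) * c) x := by
      have : HasDerivAt (fun s : ℝ => c * s) c x := by
        simpa using (hasDerivAt_id x).const_mul c
      exact (Real.hasDerivAt_exp (c * x)).comp x this
    have : HasDerivAt (fun s : ℝ => s ^ κ * Real.exp (c * s)) _ x := h1.mul h2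
    convert this using 1
    ring
  have hcont : ContinuousOn (fun x : ℝ => (κ * x ^ (κ - 1) + c * x ^ κ) * Real.exp (c * x))
      (uIcc 0 u) := by
    apply ContinuousOn.mul
    · apply ContinuousOn.add
      · exact continuousOn_const.mul (fun x _ => (Real.continuousAt_rpow_const x (κ-1)
          (Or.inr (by linarith))).continuousWithinAt)
      · exact continuousOn_const.mul (fun x _ => (Real.continuousAt_rpow_const x κ
          (Or.inr (by linarith))).continuousWithinAt)
    · exact (Real.continuous_exp.comp (continuous_const.mul continuous_id)).continuousOn
  have := intervalIntegral.integral_eq_sub_of_hasDerivAt hder (hcont.intervalIntegrable)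
  rw [this, Real.zero_rpow (by positivity), zero_mul, sub_zero]

lemma aux_heq {κ c lam : ℝ} (s : ℝ) :
    (κ * s ^ (κ - 1) + c * s ^ κ) * Real.exp (c * s) * Real.exp (-lam * s)
      = κ * (s ^ (κ - 1) * Real.exp ((c - lam) * s)) + c * (s ^ κ * Real.exp ((c - lam) * s)) := by
  rw [mul_assoc, ← Real.exp_add, show c * s + -lam * s = (c - lam) * s by ring]
  ring

lemma aux_h1 {κ c lam : ℝ} (hκ : 1 ≤ κ) (hlam : c < lam) :
    IntegrableOn (fun s : ℝ => s ^ (κ - 1) * Real.exp ((c - lam) * s)) (Ioi 0) := by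
  have := integrableOn_rpow_mul_exp_neg_mul_rpow (p := 1) (s := κ - 1) (b := lam - c)
    (by linarith) zero_lt_one (by linarith)
  simpa [Real.rpow_one] using this

lemma aux_h2 {κ c lam : ℝ} (hκ : 1 ≤ κ) (hlam : c < lam) :
    IntegrableOn (fun s : ℝ => s ^ κ * Real.exp ((c - lam) * s)) (Ioi 0) := by
  have := integrableOn_rpow_mul_exp_neg_mul_rpow (p := 1) (s := κ) (b := lam - c)
    (by linarith) zero_lt_one (by linarith)
  simpa [Real.rpow_one] using this

lemma aux_int {κ c lam : ℝ} (hκ : 1 ≤ κ) (hlam : c < lam) :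
    IntegrableOn (fun s : ℝ => (κ * s ^ (κ - 1) + c * s ^ κ) * Real.exp (c * s)
      * Real.exp (-lam * s)) (Ioi 0) := by
  have := (((aux_h1 hκ hlam).const_mul κ).add ((aux_h2 hκ hlam).const_mul c))
  apply Integrable.congr this
  filter_upwards with s
  exact (aux_heq s).symm

lemma aux_gamma {κ c lam : ℝ} (hκ : 1 ≤ κ) (hc : 0 ≤ c) (hlam : c < lam) :
    ∫ s in Ioi (0:ℝ), (κ * s ^ (κ - 1) + c * s ^ κ) * Real.exp (c * s) * Real.exp (-lam * s)
      = lam * Real.Gamma (κ + 1) / (lam - c) ^ (κ + 1) := by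
  have hb : (0:ℝ) < lam - c := by linarith
  have hκ0 : (0:ℝ) < κ := by linarith
  have congr1 : ∫ s in Ioi (0:ℝ), (κ * s ^ (κ - 1) + c * s ^ κ) * Real.exp (c * s)
        * Real.exp (-lam * s)
      = ∫ s in Ioi (0:ℝ), (κ * (s ^ (κ - 1) * Real.exp ((c - lam) * s))
        + c * (s ^ κ * Real.exp ((c - lam) * s))) := by
    apply setIntegral_congr_fun measurableSet_Ioi
    intro s _
    exact aux_heq s
  rw [congr1, integral_add (((aux_h1 hκ hlam).const_mul κ)) (((aux_h2 hκ hlam).const_mul c)),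
    integral_const_mul, integral_const_mul]
  have hexp : ∀ s : ℝ, Real.exp ((c - lam) * s) = Real.exp (-((lam - c) * s)) := by
    intro s; congr 1; ring
  simp_rw [hexp]
  have e1 : ∫ s in Ioi (0:ℝ), s ^ (κ - 1) * Real.exp (-((lam - c) * s))
      = (1/(lam - c)) ^ κ * Real.Gamma κ :=
    Real.integral_rpow_mul_exp_neg_mul_Ioi hκ0 hb
  have e2 : ∫ s in Ioi (0:ℝ), s ^ κ * Real.exp (-((lam - c) * s))
      = (1/(lam - c)) ^ (κ + 1) * Real.Gamma (κ + 1) := by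
    have := Real.integral_rpow_mul_exp_neg_mul_Ioi (a := κ + 1) (by linarith) hb
    simpa using this
  rw [e1, e2]
  have hG : Real.Gamma (κ + 1) = κ * Real.Gamma κ := Real.Gamma_add_one hκ0.ne'
  have hpow : ((1:ℝ)/(lam - c)) ^ κ = (1/(lam - c)) ^ (κ + 1) * (lam - c) := by
    rw [Real.rpow_add_one (by positivity)]
    field_simp
  rw [hpow, hG]
  have hinv : ((1:ℝ)/(lam - c)) ^ (κ + 1) = 1 / (lam - c) ^ (κ + 1) := by
    rw [one_div, Real.inv_rpow hb.le, one_div]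
  rw [hinv]
  have hpos : (0:ℝ) < (lam - c) ^ (κ + 1) := Real.rpow_pos_of_pos hb _
  field_simp
  ring

lemma aux_ind (u : ℝ) (h : ℝ → ℝ≥0∞) :
    ∫⁻ s in Ioi (0:ℝ), (if s < u then h s else 0) = ∫⁻ s in Ioc 0 u, h s := by
  have heq : (fun s => if s < u then h s else 0) = (Iio u).indicator h := by
    funext s
    simp [Set.indicator_apply, Set.mem_Iio]
  rw [heq, lintegral_indicator measurableSet_Iio, Measure.restrict_restrict measurableSet_Iio,
    Iio_inter_Ioi]
  exact setLIntegral_congr Ioo_ae_eq_Ioc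

/-- Moment and tail bound for the exponential functional `∫₀^T exp(α ξ_s) ds` of a
process `ξ` with `E[exp(α κ₀ ξ_s)] = exp(s c)`, stopped at an independent exponential
time `T` of rate `λ > c`:
`E[(∫₀^T e^{αξ_s} ds)^{κ₀}] ≤ λ Γ(κ₀+1)/(λ-c)^{κ₀+1}`, and hence by Markov's
inequality `P(∫₀^T e^{αξ_s} ds > t) ≤ λ Γ(κ₀+1) (λ-c)^{-(κ₀+1)} t^{-κ₀}` for `t > 0`. -/
theorem stmt5
    {Ω : Type*} [MeasurableSpace Ω] (P : Measure Ω) [IsProbabilityMeasure P]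
    (α κ₀ c lam : ℝ) (hα : 0 < α) (hκ₀ : 1 ≤ κ₀) (hc : 0 ≤ c) (hlam : c < lam)
    (ξ : ℝ → Ω → ℝ) (hmeas : Measurable (Function.uncurry ξ))
    (hmom : ∀ s : ℝ, 0 ≤ s → ∫ ω, Real.exp (α * κ₀ * ξ s ω) ∂P = Real.exp (s * c))
    (T : Ω → ℝ) (hTmeas : Measurable T) (hT0 : ∀ ω, 0 ≤ T ω)
    (hTexp : ∀ t : ℝ, 0 ≤ t → P {ω | t < T ω} = ENNReal.ofReal (Real.exp (-lam * t)))
    (hindep : ∀ s : ℝ, 0 ≤ s → IndepFun (fun ω => ξ s ω) T P) :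
    (∫ ω, (∫ s in (0 : ℝ)..(T ω), Real.exp (α * ξ s ω)) ^ κ₀ ∂P)
        ≤ lam * Real.Gamma (κ₀ + 1) / (lam - c) ^ (κ₀ + 1) ∧
    ∀ t : ℝ, 0 < t →
      (P {ω | t < ∫ s in (0 : ℝ)..(T ω), Real.exp (α * ξ s ω)}).toReal
        ≤ lam * Real.Gamma (κ₀ + 1) * (lam - c) ^ (-(κ₀ + 1)) * t ^ (-κ₀) := by
  have hκpos : (0:ℝ) < κ₀ := lt_of_lt_of_le one_pos hκ₀
  have hκ0' : (0:ℝ) ≤ κ₀ - 1 := by linarith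
  have hlam0 : (0:ℝ) < lam := lt_of_le_of_lt hc hlam
  set f : Ω → ℝ := fun ω => ∫ s in (0 : ℝ)..(T ω), Real.exp (α * ξ s ω) with hfdef
  have hf0 : ∀ ω, 0 ≤ f ω :=
    fun ω => intervalIntegral.integral_nonneg (hT0 ω) (fun s _ => (Real.exp_pos _).le)
  -- measurability of f
  have hfmeas : Measurable f := by
    have hset : MeasurableSet {q : Ω × ℝ | q.2 ∈ Ioc 0 (T q.1)} :=
      (measurableSet_lt measurable_const measurable_snd).inter
        (measurableSet_le measurable_snd (hTmeas.comp measurable_fst))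
    have h1 : StronglyMeasurable (fun q : Ω × ℝ =>
        Set.indicator {q : Ω × ℝ | q.2 ∈ Ioc 0 (T q.1)}
          (fun q => Real.exp (α * ξ q.2 q.1)) q) := by
      apply Measurable.stronglyMeasurable
      exact Measurable.indicator
        ((measurable_const.mul (hmeas.comp measurable_swap)).exp) hset
    have h2 : StronglyMeasurable fun ω : Ω => ∫ s, Set.indicator {q : Ω × ℝ | q.2 ∈ Ioc 0 (T q.1)}
        (fun q => Real.exp (α * ξ q.2 q.1)) (ω, s) ∂(volume : Measure ℝ) :=
      h1.integral_prod_right'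
    have heq : f = fun ω => ∫ s, Set.indicator {q : Ω × ℝ | q.2 ∈ Ioc 0 (T q.1)}
        (fun q => Real.exp (α * ξ q.2 q.1)) (ω, s) := by
      funext ω
      rw [hfdef]
      simp only
      rw [intervalIntegral.integral_of_le (hT0 ω), ← integral_indicator measurableSet_Ioc]
      apply integral_congr_ae
      apply Filter.Eventually.of_forall
      intro s
      simp only [Set.indicator_apply, Set.mem_setOf_eq, Set.mem_Ioc]
    rw [heq]
    exact h2.measurable
  set ψ : ℝ → ℝ := fun s => (κ₀ * s ^ (κ₀ - 1) + c * s ^ κ₀) * Real.exp (c * s) with hψdef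
  have hψcont : Continuous ψ := by
    apply Continuous.mul
    · exact (continuous_const.mul (Real.continuous_rpow_const hκ0')).add
        (continuous_const.mul (Real.continuous_rpow_const hκpos.le))
    · exact Real.continuous_exp.comp (continuous_const.mul continuous_id)
  have hψnn : ∀ s : ℝ, 0 ≤ s → 0 ≤ ψ s := by
    intro s hs
    have h1 : 0 ≤ s ^ (κ₀ - 1) := Real.rpow_nonneg hs _
    have h2 : 0 ≤ s ^ κ₀ := Real.rpow_nonneg hs _
    have := Real.exp_pos (c * s)
    positivity
  set B : ℝ := lam * Real.Gamma (κ₀ + 1) / (lam - c) ^ (κ₀ + 1) with hBdef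
  have hB0 : 0 < B := by
    apply div_pos (mul_pos hlam0 (Real.Gamma_pos_of_pos (by linarith)))
      (Real.rpow_pos_of_pos (by linarith) _)
  -- the three product-measurable functions
  set Φ₁ : Ω → ℝ → ℝ≥0∞ := fun ω s =>
    if s < T ω then ENNReal.ofReal (T ω ^ (κ₀ - 1))
      * ENNReal.ofReal (Real.exp (α * κ₀ * ξ s ω)) else 0 with hΦ₁def
  set Φ₂ : Ω → ℝ → ℝ≥0∞ := fun ω s =>
    if s < T ω then ENNReal.ofReal (T ω ^ (κ₀ - 1) * Real.exp (s * c)) else 0 with hΦ₂def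
  set Φ₃ : Ω → ℝ → ℝ≥0∞ := fun ω s =>
    if s < T ω then ENNReal.ofReal (ψ s) else 0 with hΦ₃def
  have hsetm : MeasurableSet {p : Ω × ℝ | p.2 < T p.1} :=
    measurableSet_lt measurable_snd (hTmeas.comp measurable_fst)
  have hTpowm : Measurable (fun p : Ω × ℝ => ENNReal.ofReal (T p.1 ^ (κ₀ - 1))) :=
    ((Real.continuous_rpow_const hκ0').measurable.comp
      (hTmeas.comp measurable_fst)).ennreal_ofReal
  have hHm : Measurable (fun p : Ω × ℝ => ENNReal.ofReal (Real.exp (α * κ₀ * ξ p.2 p.1))) :=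
    ((measurable_const.mul (hmeas.comp measurable_swap)).exp).ennreal_ofReal
  have hΦ₁m : Measurable (Function.uncurry Φ₁) :=
    Measurable.ite hsetm (hTpowm.mul hHm) measurable_const
  have hΦ₂m : Measurable (Function.uncurry Φ₂) := by
    apply Measurable.ite hsetm ?_ measurable_const
    exact (((Real.continuous_rpow_const hκ0').measurable.comp (hTmeas.comp measurable_fst)).mul
      ((measurable_snd.mul measurable_const).exp)).ennreal_ofReal
  have hΦ₃m : Measurable (Function.uncurry Φ₃) :=
    Measurable.ite hsetm ((hψcont.measurable.comp measurable_snd).ennreal_ofReal)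
      measurable_const
  -- per-ω measurability of sections
  have hξsec : ∀ ω, Measurable (fun s : ℝ => ξ s ω) := by
    intro ω
    exact hmeas.comp (measurable_id.prodMk measurable_const)
  -- the key estimate
  have key : ∫⁻ ω, ENNReal.ofReal (f ω ^ κ₀) ∂P ≤ ENNReal.ofReal B := by
    have hgm : ∀ ω, Measurable (fun s : ℝ => ENNReal.ofReal (Real.exp (α * ξ s ω))) := by
      intro ω
      exact ((measurable_const.mul (hξsec ω)).exp).ennreal_ofReal
    have hHsec : ∀ ω, Measurable (fun s : ℝ => ENNReal.ofReal (Real.exp (α * κ₀ * ξ s ω))) := by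
      intro ω
      exact ((measurable_const.mul (hξsec ω)).exp).ennreal_ofReal
    calc ∫⁻ ω, ENNReal.ofReal (f ω ^ κ₀) ∂P
        ≤ ∫⁻ ω, ∫⁻ s in Ioi (0:ℝ), Φ₁ ω s ∂volume ∂P := by
          apply lintegral_mono
          intro ω
          show ENNReal.ofReal (f ω ^ κ₀) ≤ ∫⁻ s in Ioi (0:ℝ), Φ₁ ω s ∂volume
          rw [← ENNReal.ofReal_rpow_of_nonneg (hf0 ω) hκpos.le]
          have hle1 : ENNReal.ofReal (f ω)
              ≤ ∫⁻ s in Ioc 0 (T ω), ENNReal.ofReal (Real.exp (α * ξ s ω)) := by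
            rw [hfdef]
            simp only
            rw [intervalIntegral.integral_of_le (hT0 ω)]
            by_cases hint : IntegrableOn (fun s => Real.exp (α * ξ s ω)) (Ioc 0 (T ω)) volume
            · rw [ofReal_integral_eq_lintegral_ofReal hint
                (Filter.Eventually.of_forall fun s => (Real.exp_pos _).le)]
            · rw [integral_undef hint]
              simp
          refine (ENNReal.rpow_le_rpow hle1 hκpos.le).trans ?_
          refine (aux_jensen (hgm ω) hκ₀).trans ?_
          have hre : ∀ s : ℝ, (ENNReal.ofReal (Real.exp (α * ξ s ω))) ^ κ₀
              = ENNReal.ofReal (Real.exp (α * κ₀ * ξ s ω)) := by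
            intro s
            rw [ENNReal.ofReal_rpow_of_nonneg (Real.exp_pos _).le hκpos.le, ← Real.exp_mul]
            congr 2
            ring
          rw [lintegral_congr hre]
          rw [← aux_ind (T ω) (fun s => ENNReal.ofReal (Real.exp (α * κ₀ * ξ s ω)))]
          rw [ENNReal.ofReal_rpow_of_nonneg (hT0 ω) hκ0']
          rw [← lintegral_const_mul _ (by
            exact Measurable.ite (measurableSet_Iio) (hHsec ω) measurable_const)]
          apply le_of_eq
          apply lintegral_congr
          intro s
          rw [hΦ₁def]
          simp only [mul_ite, mul_zero]
      _ = ∫⁻ s in Ioi (0:ℝ), ∫⁻ ω, Φ₁ ω s ∂P ∂volume :=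
          lintegral_lintegral_swap hΦ₁m.aemeasurable
      _ = ∫⁻ s in Ioi (0:ℝ), ∫⁻ ω, Φ₂ ω s ∂P ∂volume := by
          apply setLIntegral_congr_fun measurableSet_Ioi
          intro s hs
          set X : Ω → ℝ≥0∞ := fun ω => ENNReal.ofReal (Real.exp (α * κ₀ * ξ s ω)) with hXdef
          set Y : Ω → ℝ≥0∞ := fun ω =>
            if s < T ω then ENNReal.ofReal (T ω ^ (κ₀ - 1)) else 0 with hYdef
          have hXm : Measurable X := ((measurable_const.mul (hmeas.comp
            (measurable_const.prodMk measurable_id))).exp).ennreal_ofReal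
          have hYm : Measurable Y :=
            Measurable.ite (measurableSet_lt measurable_const hTmeas)
              (((Real.continuous_rpow_const hκ0').measurable.comp hTmeas).ennreal_ofReal)
              measurable_const
          have hXY : ∀ ω, Φ₁ ω s = X ω * Y ω := by
            intro ω
            rw [hΦ₁def, hXdef, hYdef]
            simp only [mul_ite, mul_zero]
            by_cases h : s < T ω <;> simp [h, mul_comm]
          have hind : IndepFun X Y P := by
            have := (hindep s (le_of_lt hs)).comp
              (φ := fun x : ℝ => ENNReal.ofReal (Real.exp (α * κ₀ * x)))
              (ψ := fun u : ℝ => if s < u then ENNReal.ofReal (u ^ (κ₀ - 1)) else 0)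
              ((measurable_const.mul measurable_id).exp.ennreal_ofReal)
              (Measurable.ite (measurableSet_lt measurable_const measurable_id)
                ((Real.continuous_rpow_const hκ0').measurable.ennreal_ofReal) measurable_const)
            exact this
          have hXint : ∫⁻ ω, X ω ∂P = ENNReal.ofReal (Real.exp (s * c)) := by
            have hint : Integrable (fun ω => Real.exp (α * κ₀ * ξ s ω)) P := by
              by_contra hni
              have h0 := integral_undef hni
              rw [hmom s (le_of_lt hs)] at h0
              exact (Real.exp_pos _).ne' h0
            rw [hXdef]
            simp only
            rw [← ofReal_integral_eq_lintegral_ofReal hint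
              (Filter.Eventually.of_forall fun ω => (Real.exp_pos _).le), hmom s (le_of_lt hs)]
          beta_reduce
          rw [lintegral_congr hXY,
            lintegral_mul_eq_lintegral_mul_lintegral_of_indepFun'' hXm.aemeasurable
              hYm.aemeasurable hind, hXint,
            ← lintegral_const_mul _ hYm]
          apply lintegral_congr
          intro ω
          rw [hΦ₂def, hYdef]
          simp only [mul_ite, mul_zero]
          by_cases h : s < T ω
          · simp only [h, if_true]
            rw [← ENNReal.ofReal_mul (Real.exp_pos _).le, mul_comm]
          · simp [h]
      _ = ∫⁻ ω, ∫⁻ s in Ioi (0:ℝ), Φ₂ ω s ∂volume ∂P :=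
          (lintegral_lintegral_swap hΦ₂m.aemeasurable).symm
      _ ≤ ∫⁻ ω, ENNReal.ofReal (T ω ^ κ₀ * Real.exp (c * T ω)) ∂P := by
          apply lintegral_mono
          intro ω
          show ∫⁻ s in Ioi (0:ℝ), Φ₂ ω s ∂volume ≤ ENNReal.ofReal (T ω ^ κ₀ * Real.exp (c * T ω))
          have h1 : ∫⁻ s in Ioi (0:ℝ), Φ₂ ω s ∂volume
              = ∫⁻ s in Ioc 0 (T ω), ENNReal.ofReal (T ω ^ (κ₀ - 1) * Real.exp (s * c)) := by
            rw [hΦ₂def]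
            exact aux_ind (T ω) _
          rw [h1]
          have h2 : ∫⁻ s in Ioc 0 (T ω), ENNReal.ofReal (T ω ^ (κ₀ - 1) * Real.exp (s * c))
              ≤ ∫⁻ _ in Ioc 0 (T ω),
                  ENNReal.ofReal (T ω ^ (κ₀ - 1) * Real.exp (c * T ω)) := by
            apply setLIntegral_mono measurable_const
            intro s hs
            apply ENNReal.ofReal_le_ofReal
            apply mul_le_mul_of_nonneg_left _ (Real.rpow_nonneg (hT0 ω) _)
            apply Real.exp_le_exp.2
            calc s * c = c * s := mul_comm _ _
              _ ≤ c * T ω := mul_le_mul_of_nonneg_left hs.2 hc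
          refine h2.trans ?_
          rw [setLIntegral_const, Real.volume_Ioc, sub_zero,
            ← ENNReal.ofReal_mul (mul_nonneg (Real.rpow_nonneg (hT0 ω) _) (Real.exp_pos _).le)]
          apply ENNReal.ofReal_le_ofReal
          apply le_of_eq
          rcases eq_or_lt_of_le (hT0 ω) with h0 | h0
          · rw [← h0]
            simp [Real.zero_rpow hκpos.ne']
          · rw [show κ₀ = κ₀ - 1 + 1 by ring, Real.rpow_add_one h0.ne']
            ring_nf
      _ = ∫⁻ ω, ∫⁻ s in Ioi (0:ℝ), Φ₃ ω s ∂volume ∂P := by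
          apply lintegral_congr
          intro ω
          rw [hΦ₃def, aux_ind (T ω) (fun s => ENNReal.ofReal (ψ s))]
          have hint : IntegrableOn ψ (Ioc 0 (T ω)) volume := hψcont.integrableOn_Ioc
          have hnn : 0 ≤ᵐ[volume.restrict (Ioc 0 (T ω))] ψ :=
            (ae_restrict_iff' measurableSet_Ioc).2
              (Filter.Eventually.of_forall fun s hs => hψnn s hs.1.le)
          rw [← ofReal_integral_eq_lintegral_ofReal hint hnn,
            ← intervalIntegral.integral_of_le (hT0 ω), hψdef, ← aux_ftc hκ₀ (hT0 ω)]
      _ = ∫⁻ s in Ioi (0:ℝ), ∫⁻ ω, Φ₃ ω s ∂P ∂volume :=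
          lintegral_lintegral_swap hΦ₃m.aemeasurable
      _ = ∫⁻ s in Ioi (0:ℝ), ENNReal.ofReal (ψ s * Real.exp (-lam * s)) ∂volume := by
          apply setLIntegral_congr_fun measurableSet_Ioi
          intro s hs
          have heq : (fun ω => Φ₃ ω s)
              = {ω | s < T ω}.indicator (fun _ => ENNReal.ofReal (ψ s)) := by
            funext ω
            rw [hΦ₃def]
            simp [Set.indicator_apply]
          beta_reduce
          rw [heq, lintegral_indicator (measurableSet_lt measurable_const hTmeas),
            setLIntegral_const, hTexp s (le_of_lt hs),
            ← ENNReal.ofReal_mul (hψnn s (le_of_lt hs))]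
      _ = ENNReal.ofReal B := by
          rw [← ofReal_integral_eq_lintegral_ofReal ?_ ?_]
          · rw [hBdef]
            congr 1
            rw [hψdef]
            exact aux_gamma hκ₀ hc hlam
          · rw [hψdef]
            exact aux_int hκ₀ hlam
          · exact (ae_restrict_iff' measurableSet_Ioi).2
              (Filter.Eventually.of_forall fun s hs =>
                mul_nonneg (hψnn s (le_of_lt hs)) (Real.exp_pos _).le)
  -- conclusion 1
  have hcon1 : ∫ ω, f ω ^ κ₀ ∂P ≤ B := by
    rw [integral_eq_lintegral_of_nonneg_ae
      (Filter.Eventually.of_forall fun ω => Real.rpow_nonneg (hf0 ω) _)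
      (((Real.continuous_rpow_const hκpos.le).measurable.comp hfmeas).aestronglyMeasurable)]
    exact ENNReal.toReal_le_of_le_ofReal hB0.le key
  refine ⟨hcon1, ?_⟩
  -- conclusion 2 : Markov
  intro t ht
  have htκ : 0 < t ^ κ₀ := Real.rpow_pos_of_pos ht _
  have hsub : {ω | t < f ω} ⊆ {ω | ENNReal.ofReal (t ^ κ₀) ≤ ENNReal.ofReal (f ω ^ κ₀)} := by
    intro ω hω
    apply ENNReal.ofReal_le_ofReal
    exact Real.rpow_le_rpow ht.le (le_of_lt hω) hκpos.le
  have hmarkov := mul_meas_ge_le_lintegral₀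
    (((Real.continuous_rpow_const hκpos.le).measurable.comp hfmeas).ennreal_ofReal.aemeasurable) (ENNReal.ofReal (t ^ κ₀)) (μ := P)
  have hchain : ENNReal.ofReal (t ^ κ₀) * P {ω | t < f ω} ≤ ENNReal.ofReal B := by
    calc ENNReal.ofReal (t ^ κ₀) * P {ω | t < f ω}
        ≤ ENNReal.ofReal (t ^ κ₀)
          * P {ω | ENNReal.ofReal (t ^ κ₀) ≤ ENNReal.ofReal (f ω ^ κ₀)} :=
          mul_le_mul_right (measure_mono hsub) _
      _ ≤ ∫⁻ ω, ENNReal.ofReal (f ω ^ κ₀) ∂P := hmarkov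
      _ ≤ ENNReal.ofReal B := key
  have hPle : P {ω | t < f ω} ≤ ENNReal.ofReal B / ENNReal.ofReal (t ^ κ₀) := by
    rw [ENNReal.le_div_iff_mul_le (Or.inl (by simp [htκ])) (Or.inl ENNReal.ofReal_ne_top)]
    rw [mul_comm]
    exact hchain
  have hfin : ENNReal.ofReal B / ENNReal.ofReal (t ^ κ₀) ≠ ⊤ := by
    exact (ENNReal.div_lt_top ENNReal.ofReal_ne_top (by simp [htκ])).ne
  have := ENNReal.toReal_mono hfin hPle
  refine this.trans ?_
  rw [ENNReal.toReal_div, ENNReal.toReal_ofReal hB0.le, ENNReal.toReal_ofReal htκ.le]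
  rw [hBdef]
  rw [Real.rpow_neg (by linarith : (0:ℝ) ≤ lam - c), Real.rpow_neg ht.le]
  apply le_of_eq
  field_simp
end

section
/- Let d ≥ 2 be an integer, γ ∈ (0, 1), and c₁, c₂ > 0. Let p₁ : (0, ∞) → [0, ∞) be bounded with ∫₀^∞ p₁(u) du = 1, ∫₀^∞ u^{−(d−1)/2} p₁(u) du < ∞, and such that lim_{u→∞} p₁(u) u^{1+γ} exists and is finite; for t > 0 set p_t(u) = t^{−1/γ} p₁(t^{−1/γ} u). Then there exists a constant c₃ > 0, depending only on d, γ, c₁, c₂ and p₁, such that for every ρ > 0, every t > 0, and every measurable h : (0,∞) → [0,∞) satisfying h(u) ≤ c₁ u^{−(d−1)/2} exp(−c₂ ρ²/u) for all u > 0, one has ∫₀^∞ h(u) p_t(u) du ≤ c₃ · min( t^{−(d−1)/(2γ)}, t · ρ^{−(d−1)−2γ} ). -/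
open MeasureTheory Filter Set Real

/-!
Two bounds on the integrand are integrated after the substitution `v = t^{-1/γ} u`. Dropping the
Gaussian factor, `h(u) ≤ c₁ u^{-(d-1)/2}` together with the negative moment of `p₁` gives
`c · t^{-(d-1)/(2γ)}`. Alternatively, boundedness and the tail limit give `p₁(v) ≤ K v^{-1-γ}`,
which turns the integral into `t · ∫ u^{-σ-1} e^{-c₂ρ²/u} du` with `σ = (d-1)/2 + γ`; after
`u = 1/y` this is the Gamma integral `Γ(σ) (c₂ρ²)^{-σ}`, i.e. `c · t ρ^{-(d-1)-2γ}`.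
-/

lemma exists_le_mul_rpow_neg_of_tendsto {f : ℝ → ℝ} {a M L : ℝ} (ha : 0 ≤ a)
    (hM : ∀ u, 0 < u → f u ≤ M) (hlim : Tendsto (fun u => f u * u ^ a) atTop (nhds L)) :
    ∃ K, ∀ v, 0 < v → f v ≤ K * v ^ (-a) := by
  obtain ⟨V, hV⟩ := eventually_atTop.mp (hlim.eventually_le_const (lt_add_one L))
  refine ⟨max (max M 0 * V ^ a) (L + 1), fun v hv => ?_⟩
  have hbound : f v * v ^ a ≤ max (max M 0 * V ^ a) (L + 1) := by
    rcases le_or_gt V v with hVv | hvV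
    · exact (hV v hVv).trans (le_max_right _ _)
    · refine le_max_of_le_left (mul_le_mul ((hM v hv).trans (le_max_left _ _)) ?_
        (rpow_nonneg hv.le _) (le_max_right _ _))
      exact rpow_le_rpow hv.le hvV.le ha
  calc f v = f v * v ^ a * v ^ (-a) := by
        rw [mul_assoc, ← rpow_add hv, add_neg_cancel, rpow_zero, mul_one]
    _ ≤ _ := mul_le_mul_of_nonneg_right hbound (rpow_nonneg hv.le _)

lemma integrableOn_and_integral_rpow_mul_exp_neg_div_Ioi {σ b : ℝ} (hσ : 0 < σ) (hb : 0 < b) :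
    IntegrableOn (fun x : ℝ => x ^ (-σ - 1) * exp (-b / x)) (Ioi 0) ∧
      ∫ x in Ioi (0 : ℝ), x ^ (-σ - 1) * exp (-b / x) = (1 / b) ^ σ * Gamma σ := by
  set φ : ℝ → ℝ := fun y => y ^ (σ - 1) * exp (-(b * y))
  have hφ : IntegrableOn φ (Ioi 0) := by
    simpa [φ, rpow_one] using
      integrableOn_rpow_mul_exp_neg_mul_rpow (s := σ - 1) (p := 1) (by linarith) one_pos hb
  -- the substitution `y = 1 / x`
  have hsubst : EqOn (fun x : ℝ => x ^ ((-1 : ℝ) - 1) • φ (x ^ (-1 : ℝ)))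
      (fun x => x ^ (-σ - 1) * exp (-b / x)) (Ioi 0) := by
    intro x (hx : 0 < x)
    simp only [smul_eq_mul, φ, rpow_neg_one, inv_rpow hx.le, ← rpow_neg hx.le, ← mul_assoc,
      ← rpow_add hx, div_eq_mul_inv, neg_mul]
    ring_nf
  refine ⟨((integrableOn_Ioi_comp_rpow_iff' φ (by norm_num)).2 hφ).congr_fun hsubst
    measurableSet_Ioi, ?_⟩
  rw [← setIntegral_congr_fun measurableSet_Ioi hsubst, ← integral_rpow_mul_exp_neg_mul_Ioi hσ hb]
  simpa using integral_comp_rpow_Ioi φ (p := -1) (by norm_num)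

section Scaled

variable {k p : ℝ → ℝ} {s : ℝ}

lemma setIntegral_mul_comp_mul_le_of_le_rpow {C e : ℝ} (hs : 0 < s)
    (hk0 : ∀ u, 0 < u → 0 ≤ k u) (hp0 : ∀ v, 0 < v → 0 ≤ p v)
    (hk : ∀ u, 0 < u → k u ≤ C * u ^ e)
    (hmom : IntegrableOn (fun v => v ^ e * p v) (Ioi 0)) :
    ∫ u in Ioi (0 : ℝ), k u * (s * p (s * u))
      ≤ C * s ^ (-e) * ∫ v in Ioi (0 : ℝ), v ^ e * p v := by
  set g : ℝ → ℝ := fun v => v ^ e * p v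
  have hg : IntegrableOn (fun u => C * s ^ (1 - e) * g (s * u)) (Ioi 0) := by
    refine Integrable.const_mul ?_ _
    exact (integrableOn_Ioi_comp_mul_left_iff g 0 hs).2 (by rwa [mul_zero])
  calc ∫ u in Ioi (0 : ℝ), k u * (s * p (s * u))
      ≤ ∫ u in Ioi (0 : ℝ), C * s ^ (1 - e) * g (s * u) := by
        refine setIntegral_mono_of_nonneg (fun u (hu : 0 < u) => ?_) (fun u (hu : 0 < u) => ?_) hg
        · exact mul_nonneg (hk0 u hu) (mul_nonneg hs.le (hp0 _ (mul_pos hs hu)))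
        · calc k u * (s * p (s * u)) ≤ C * u ^ e * (s * p (s * u)) :=
                mul_le_mul_of_nonneg_right (hk u hu) (mul_nonneg hs.le (hp0 _ (mul_pos hs hu)))
            _ = C * s ^ (1 - e) * g (s * u) := by
                simp only [g, mul_rpow hs.le hu.le, rpow_sub hs, rpow_one]
                field_simp
    _ = C * s ^ (-e) * ∫ v in Ioi (0 : ℝ), g v := by
        rw [integral_const_mul, integral_comp_mul_left_Ioi g 0 hs, mul_zero, smul_eq_mul,
          rpow_sub hs, rpow_one, rpow_neg hs.le]
        field_simp

lemma setIntegral_mul_comp_mul_le_of_le_exp {C K e a b : ℝ} (hs : 0 < s) (hb : 0 < b)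
    (hea : e < a - 1) (hk0 : ∀ u, 0 < u → 0 ≤ k u) (hp0 : ∀ v, 0 < v → 0 ≤ p v)
    (hk : ∀ u, 0 < u → k u ≤ C * u ^ e * exp (-b / u))
    (hp : ∀ v, 0 < v → p v ≤ K * v ^ (-a)) :
    ∫ u in Ioi (0 : ℝ), k u * (s * p (s * u))
      ≤ C * K * s ^ (1 - a) * ((1 / b) ^ (a - 1 - e) * Gamma (a - 1 - e)) := by
  obtain ⟨hint, hval⟩ := integrableOn_and_integral_rpow_mul_exp_neg_div_Ioi (sub_pos.2 hea) hb
  rw [show -(a - 1 - e) - 1 = e - a by ring] at hint hval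
  calc ∫ u in Ioi (0 : ℝ), k u * (s * p (s * u))
      ≤ ∫ u in Ioi (0 : ℝ), C * K * s ^ (1 - a) * (u ^ (e - a) * exp (-b / u)) := by
        refine setIntegral_mono_of_nonneg (fun u (hu : 0 < u) => ?_) (fun u (hu : 0 < u) => ?_)
          (hint.const_mul _)
        · exact mul_nonneg (hk0 u hu) (mul_nonneg hs.le (hp0 _ (mul_pos hs hu)))
        · calc k u * (s * p (s * u)) ≤ C * u ^ e * exp (-b / u) * (s * (K * (s * u) ^ (-a))) :=
                mul_le_mul (hk u hu) (mul_le_mul_of_nonneg_left (hp _ (mul_pos hs hu)) hs.le)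
                  (mul_nonneg hs.le (hp0 _ (mul_pos hs hu))) ((hk0 u hu).trans (hk u hu))
            _ = C * K * s ^ (1 - a) * (u ^ (e - a) * exp (-b / u)) := by
                rw [mul_rpow hs.le hu.le, rpow_sub hs, rpow_sub hu, rpow_one, rpow_neg hs.le,
                  rpow_neg hu.le]
                field_simp
    _ = _ := by rw [integral_const_mul, hval]

end Scaled

lemma rpow_neg_one_div_rpow_neg {t : ℝ} (ht : 0 < t) (γ x : ℝ) :
    (t ^ (-(1 / γ))) ^ (-x) = t ^ (x / γ) := by
  rw [← rpow_mul ht.le]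
  ring_nf

lemma one_div_mul_sq_rpow {c ρ : ℝ} (hc : 0 ≤ c) (hρ : 0 ≤ ρ) (σ : ℝ) :
    (1 / (c * ρ ^ 2)) ^ σ = (1 / c) ^ σ * ρ ^ (-(2 * σ)) := by
  rw [one_div, one_div, mul_inv, mul_rpow (inv_nonneg.2 hc) (inv_nonneg.2 (sq_nonneg ρ)),
    inv_rpow (sq_nonneg ρ), ← rpow_natCast, ← rpow_mul hρ, ← rpow_neg hρ, Nat.cast_ofNat]

theorem stmt8_general
    (d : ℕ) (hd : 2 ≤ d)
    (γ : ℝ) (hγ0 : 0 < γ)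
    (c₁ c₂ : ℝ) (hc₁ : 0 < c₁) (hc₂ : 0 < c₂)
    (p₁ : ℝ → ℝ)
    (hnonneg : ∀ u : ℝ, 0 < u → 0 ≤ p₁ u)
    (hbdd : ∃ M : ℝ, ∀ u : ℝ, 0 < u → p₁ u ≤ M)
    (hmom : IntegrableOn (fun u : ℝ => u ^ (-((d : ℝ) - 1) / 2) * p₁ u) (Set.Ioi 0))
    (L : ℝ)
    (hlim : Tendsto (fun u : ℝ => p₁ u * u ^ (1 + γ)) atTop (nhds L)) :
    ∃ c₃ : ℝ, 0 < c₃ ∧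
      ∀ ρ t : ℝ, 0 < ρ → 0 < t →
      ∀ h : ℝ → ℝ, Measurable h → (∀ u : ℝ, 0 < u → 0 ≤ h u) →
        (∀ u : ℝ, 0 < u →
          h u ≤ c₁ * u ^ (-((d : ℝ) - 1) / 2) * Real.exp (-c₂ * ρ ^ 2 / u)) →
        ∫ u in Set.Ioi (0 : ℝ), h u * (t ^ (-(1 / γ)) * p₁ (t ^ (-(1 / γ)) * u))
          ≤ c₃ * min (t ^ (-((d : ℝ) - 1) / (2 * γ))) (t * ρ ^ (-((d : ℝ) - 1) - 2 * γ)) := by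
  obtain ⟨M, hM⟩ := hbdd
  obtain ⟨K, hK⟩ := exists_le_mul_rpow_neg_of_tendsto (by linarith : 0 ≤ 1 + γ) hM hlim
  have hea : -((d : ℝ) - 1) / 2 < 1 + γ - 1 := by
    have : (2 : ℝ) ≤ d := by exact_mod_cast hd
    linarith
  set σ : ℝ := 1 + γ - 1 - -((d : ℝ) - 1) / 2
  set A := c₁ * ∫ v in Ioi (0 : ℝ), v ^ (-((d : ℝ) - 1) / 2) * p₁ v with hA
  set B := c₁ * K * ((1 / c₂) ^ σ * Gamma σ) with hB
  have hc₃ : 0 < max (max A B) 1 := lt_max_of_lt_right one_pos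
  refine ⟨_, hc₃, fun ρ t hρ ht h _ hh0 hhb => ?_⟩
  have hs : 0 < t ^ (-(1 / γ)) := rpow_pos_of_pos ht _
  have hdiag := setIntegral_mul_comp_mul_le_of_le_rpow hs hh0 hnonneg (fun u hu =>
    (hhb u hu).trans (mul_le_of_le_one_right (by positivity) (exp_le_one_iff.2
      (div_nonpos_of_nonpos_of_nonneg (by nlinarith [sq_nonneg ρ]) hu.le)))) hmom
  have hoff := setIntegral_mul_comp_mul_le_of_le_exp hs (b := c₂ * ρ ^ 2) (by positivity) hea
    hh0 hnonneg (fun u hu => by simpa only [neg_mul] using hhb u hu) hK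
  rw [rpow_neg_one_div_rpow_neg ht, div_div] at hdiag
  rw [show 1 - (1 + γ) = -γ by ring, rpow_neg_one_div_rpow_neg ht, div_self hγ0.ne', rpow_one,
    one_div_mul_sq_rpow hc₂.le hρ.le, show -(2 * σ) = -((d : ℝ) - 1) - 2 * γ by ring] at hoff
  rw [mul_min_of_nonneg _ _ hc₃.le]
  refine le_min ?_ ?_
  · calc _ ≤ A * t ^ (-((d : ℝ) - 1) / (2 * γ)) := hdiag.trans_eq (by rw [hA]; ring)
      _ ≤ _ := mul_le_mul_of_nonneg_right ((le_max_left _ _).trans (le_max_left _ _))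
          (rpow_nonneg ht.le _)
  · calc _ ≤ B * (t * ρ ^ (-((d : ℝ) - 1) - 2 * γ)) := hoff.trans_eq (by rw [hB]; ring)
      _ ≤ _ := mul_le_mul_of_nonneg_right ((le_max_right _ _).trans (le_max_left _ _))
          (by positivity)

/-- Subordinated heat-kernel bound: if `h(u) ≤ c₁ u^{-(d-1)/2} exp(-c₂ ρ²/u)` and
`p_t(u) = t^{-1/γ} p₁(t^{-1/γ} u)` is the scaled density of a `γ`-stable subordinator
(with `p₁` bounded, of total mass one, with finite `(d-1)/2`-negative moment and
`p₁(u) u^{1+γ}` converging as `u → ∞`), then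
`∫₀^∞ h(u) p_t(u) du ≤ c₃ · min(t^{-(d-1)/(2γ)}, t ρ^{-(d-1)-2γ})`. -/
theorem stmt8
    (d : ℕ) (hd : 2 ≤ d)
    (γ : ℝ) (hγ0 : 0 < γ) (hγ1 : γ < 1)
    (c₁ c₂ : ℝ) (hc₁ : 0 < c₁) (hc₂ : 0 < c₂)
    (p₁ : ℝ → ℝ) (hp₁meas : Measurable p₁)
    (hnonneg : ∀ u : ℝ, 0 < u → 0 ≤ p₁ u)
    (hbdd : ∃ M : ℝ, ∀ u : ℝ, 0 < u → p₁ u ≤ M)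
    (hprob : ∫ u in Set.Ioi (0 : ℝ), p₁ u = 1)
    (hmom : IntegrableOn (fun u : ℝ => u ^ (-((d : ℝ) - 1) / 2) * p₁ u) (Set.Ioi 0))
    (L : ℝ)
    (hlim : Tendsto (fun u : ℝ => p₁ u * u ^ (1 + γ)) atTop (nhds L)) :
    ∃ c₃ : ℝ, 0 < c₃ ∧
      ∀ ρ t : ℝ, 0 < ρ → 0 < t →
      ∀ h : ℝ → ℝ, Measurable h → (∀ u : ℝ, 0 < u → 0 ≤ h u) →
        (∀ u : ℝ, 0 < u →
          h u ≤ c₁ * u ^ (-((d : ℝ) - 1) / 2) * Real.exp (-c₂ * ρ ^ 2 / u)) →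
        ∫ u in Set.Ioi (0 : ℝ), h u * (t ^ (-(1 / γ)) * p₁ (t ^ (-(1 / γ)) * u))
          ≤ c₃ * min (t ^ (-((d : ℝ) - 1) / (2 * γ))) (t * ρ ^ (-((d : ℝ) - 1) - 2 * γ)) :=
  stmt8_general d hd γ hγ0 c₁ c₂ hc₁ hc₂ p₁ hnonneg hbdd hmom L hlim
end

section
/- Let β > 0, c₀ > 0, c₁ > 0, c₂ > 0, and let 0 < κ₁ < κ₀ with κ₀ > 2β. Let (λ_j)_{j≥1} be a nondecreasing sequence of reals with λ_j ≥ c₀ j^{1/β} for all j ≥ 1, let (a_j)_{j≥1} be real numbers with |a_j| ≤ c₁ λ_j^β for all j, let F_j : (0, ∞) → [0, ∞) for each j, let N be a positive integer, and let L_1, …, L_N ≥ 0. Assume: (i) for each j ≤ N, lim_{t→∞} t^{κ₁} F_j(t) = L_j; and (ii) for each j > N and all t > 0, F_j(t) ≤ c₂ λ_j^{−κ₀} t^{−κ₀}. Then for every t > 0 the series Σ_{j=1}^∞ a_j F_j(t) converges absolutely, and lim_{t→∞} t^{κ₁} Σ_{j=1}^∞ a_j F_j(t) = Σ_{j=1}^N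 a_j L_j. -/
/-!
Split the series at `N`. Each of the first `N` terms, multiplied by `t^κ₁`, converges by
assumption. Every later term is bounded by `c₁ c₂ λ_j^(β-κ₀) t^(-κ₀)`, and `λ_j ≥ c₀ j^(1/β)` gives
`λ_j^(β-κ₀) ≤ c₀^(β-κ₀) j^((β-κ₀)/β)`, which is summable exactly because `κ₀ > 2β`. Hence the tail
is `O(t^(-κ₀))`, and after multiplication by `t^κ₁` it is `O(t^(κ₁-κ₀)) → 0`.
-/

open Filter Topology Finset

theorem summable_rpow_of_le_mul_rpow_inv {β c₀ γ : ℝ} {l : ℕ → ℝ} (hβ : 0 < β) (hc₀ : 0 < c₀)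
    (hlb : ∀ j : ℕ, 1 ≤ j → c₀ * (j : ℝ) ^ (1 / β) ≤ l j) (hγ : γ < -β) :
    Summable fun k : ℕ => l (k + 1) ^ γ := by
  have hdom : Summable fun k : ℕ => c₀ ^ γ * ((k + 1 : ℕ) : ℝ) ^ (γ / β) :=
    ((summable_nat_add_iff 1).mpr
      (Real.summable_nat_rpow.mpr ((div_lt_iff₀ hβ).mpr (by linarith)))).mul_left _
  have hlb_pos (k : ℕ) : 0 < c₀ * ((k + 1 : ℕ) : ℝ) ^ (1 / β) := by positivity
  refine hdom.of_nonneg_of_le (fun k => ?_) (fun k => ?_)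
  · exact (Real.rpow_pos_of_pos ((hlb_pos k).trans_le (hlb _ k.succ_pos)) _).le
  · calc l (k + 1) ^ γ ≤ (c₀ * ((k + 1 : ℕ) : ℝ) ^ (1 / β)) ^ γ :=
          Real.rpow_le_rpow_of_nonpos (hlb_pos k) (hlb _ k.succ_pos) (by linarith)
      _ = c₀ ^ γ * ((k + 1 : ℕ) : ℝ) ^ (γ / β) := by
          rw [Real.mul_rpow hc₀.le (by positivity), ← Real.rpow_mul (by positivity),
            one_div_mul_eq_div]

section

variable {u : ℕ → ℝ → ℝ} {b : ℕ → ℝ} {κ₀ κ₁ : ℝ}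

theorem summable_abs_of_abs_le_mul_rpow (hb : Summable b) {t : ℝ}
    (hu : ∀ k, |u k t| ≤ b k * t ^ (-κ₀)) : Summable fun k => |u k t| :=
  (hb.mul_right _).of_nonneg_of_le (fun _ => abs_nonneg _) hu

theorem tendsto_rpow_mul_tsum_zero_of_abs_le_mul_rpow (hκ : κ₁ < κ₀) (hb : Summable b)
    (hu : ∀ k, ∀ t : ℝ, 0 < t → |u k t| ≤ b k * t ^ (-κ₀)) :
    Tendsto (fun t : ℝ => t ^ κ₁ * ∑' k, u k t) atTop (𝓝 0) := by
  have hdecay : Tendsto (fun t : ℝ => (∑' k, b k) * t ^ (-(κ₀ - κ₁))) atTop (𝓝 0) := by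
    simpa using (tendsto_rpow_neg_atTop (sub_pos.mpr hκ)).const_mul (∑' k, b k)
  refine squeeze_zero_norm' ?_ hdecay
  filter_upwards [eventually_gt_atTop 0] with t ht
  have habs : Summable fun k => |u k t| := summable_abs_of_abs_le_mul_rpow hb (hu · t ht)
  have htsum : |∑' k, u k t| ≤ (∑' k, b k) * t ^ (-κ₀) :=
    calc |∑' k, u k t| ≤ ∑' k, |u k t| := by
          simpa only [Real.norm_eq_abs] using
            norm_tsum_le_tsum_norm (f := fun k => u k t) (by simpa only [Real.norm_eq_abs])
      _ ≤ ∑' k, b k * t ^ (-κ₀) := habs.tsum_le_tsum (hu · t ht) (hb.mul_right _)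
      _ = (∑' k, b k) * t ^ (-κ₀) := tsum_mul_right
  calc ‖t ^ κ₁ * ∑' k, u k t‖ = t ^ κ₁ * |∑' k, u k t| := by
        rw [Real.norm_eq_abs, abs_mul, abs_of_pos (Real.rpow_pos_of_pos ht _)]
    _ ≤ t ^ κ₁ * ((∑' k, b k) * t ^ (-κ₀)) :=
        mul_le_mul_of_nonneg_left htsum (Real.rpow_nonneg ht.le _)
    _ = (∑' k, b k) * t ^ (-(κ₀ - κ₁)) := by
        rw [mul_left_comm, ← Real.rpow_add ht, neg_sub, sub_eq_add_neg]

theorem tendsto_rpow_mul_tsum_of_tendsto_of_abs_le_mul_rpow {v : ℕ → ℝ} (N : ℕ)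
    (hκ : κ₁ < κ₀) (hb : Summable b)
    (hhead : ∀ k < N, Tendsto (fun t : ℝ => t ^ κ₁ * u k t) atTop (𝓝 (v k)))
    (htail : ∀ k, N ≤ k → ∀ t : ℝ, 0 < t → |u k t| ≤ b k * t ^ (-κ₀)) :
    (∀ t : ℝ, 0 < t → Summable fun k => |u k t|) ∧
      Tendsto (fun t : ℝ => t ^ κ₁ * ∑' k, u k t) atTop (𝓝 (∑ k ∈ range N, v k)) := by
  have hb' : Summable fun k => b (k + N) := (summable_nat_add_iff N).mpr hb
  have htail' : ∀ k, ∀ t : ℝ, 0 < t → |u (k + N) t| ≤ b (k + N) * t ^ (-κ₀) :=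
    fun k => htail (k + N) (Nat.le_add_left N k)
  have habs : ∀ t : ℝ, 0 < t → Summable fun k => |u k t| := fun t ht =>
    (summable_nat_add_iff N).mp (summable_abs_of_abs_le_mul_rpow hb' (htail' · t ht))
  refine ⟨habs, ?_⟩
  have hsplit : ∀ᶠ t : ℝ in atTop, ∑ k ∈ range N, t ^ κ₁ * u k t + t ^ κ₁ * ∑' k, u (k + N) t
      = t ^ κ₁ * ∑' k, u k t := by
    filter_upwards [eventually_gt_atTop 0] with t ht
    rw [← mul_sum, ← mul_add, (habs t ht).of_abs.sum_add_tsum_nat_add]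
  simpa using ((tendsto_finsetSum _ fun k hk => hhead k (mem_range.mp hk)).add
    (tendsto_rpow_mul_tsum_zero_of_abs_le_mul_rpow hκ hb' htail')).congr' hsplit

end

theorem stmt9_general
    (β c₀ c₁ c₂ κ₀ κ₁ : ℝ)
    (hβ : 0 < β) (hc₀ : 0 < c₀)
    (hκ : κ₁ < κ₀) (hκβ : 2 * β < κ₀)
    (l : ℕ → ℝ)
    (hlb : ∀ j : ℕ, 1 ≤ j → c₀ * (j : ℝ) ^ (1 / β) ≤ l j)
    (a : ℕ → ℝ) (ha : ∀ j : ℕ, 1 ≤ j → |a j| ≤ c₁ * l j ^ β)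
    (F : ℕ → ℝ → ℝ) (hF : ∀ j : ℕ, 1 ≤ j → ∀ t : ℝ, 0 < t → 0 ≤ F j t)
    (N : ℕ)
    (L : ℕ → ℝ)
    (hlim : ∀ j : ℕ, 1 ≤ j → j ≤ N →
      Tendsto (fun t : ℝ => t ^ κ₁ * F j t) atTop (nhds (L j)))
    (htail : ∀ j : ℕ, N < j → ∀ t : ℝ, 0 < t → F j t ≤ c₂ * l j ^ (-κ₀) * t ^ (-κ₀)) :
    (∀ t : ℝ, 0 < t → Summable (fun j : ℕ => |a (j + 1) * F (j + 1) t|)) ∧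
    Tendsto (fun t : ℝ => t ^ κ₁ * ∑' j : ℕ, a (j + 1) * F (j + 1) t)
      atTop (nhds (∑ j ∈ Finset.Icc 1 N, a j * L j)) := by
  have hl_pos : ∀ j : ℕ, 1 ≤ j → 0 < l j := fun j hj =>
    (mul_pos hc₀ (Real.rpow_pos_of_pos (by exact_mod_cast hj) _)).trans_le (hlb j hj)
  have hhead : ∀ k < N, Tendsto (fun t : ℝ => t ^ κ₁ * (a (k + 1) * F (k + 1) t)) atTop
      (𝓝 (a (k + 1) * L (k + 1))) := fun k hk =>
    ((hlim (k + 1) k.succ_pos hk).const_mul (a (k + 1))).congr fun t => mul_left_comm _ _ _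
  have hterm : ∀ k, N ≤ k → ∀ t : ℝ, 0 < t →
      |a (k + 1) * F (k + 1) t| ≤ c₁ * c₂ * l (k + 1) ^ (β - κ₀) * t ^ (-κ₀) := by
    intro k hk t ht
    have hl := hl_pos (k + 1) k.succ_pos
    calc |a (k + 1) * F (k + 1) t| = |a (k + 1)| * F (k + 1) t := by
          rw [abs_mul, abs_of_nonneg (hF _ k.succ_pos t ht)]
      _ ≤ c₁ * l (k + 1) ^ β * (c₂ * l (k + 1) ^ (-κ₀) * t ^ (-κ₀)) :=
          mul_le_mul (ha _ k.succ_pos) (htail _ (Nat.lt_succ_of_le hk) t ht)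
            (hF _ k.succ_pos t ht) ((abs_nonneg _).trans (ha _ k.succ_pos))
      _ = c₁ * c₂ * l (k + 1) ^ (β - κ₀) * t ^ (-κ₀) := by
          rw [sub_eq_add_neg, Real.rpow_add hl]; ring
  have hb : Summable fun k : ℕ => c₁ * c₂ * l (k + 1) ^ (β - κ₀) :=
    (summable_rpow_of_le_mul_rpow_inv hβ hc₀ hlb (by linarith)).mul_left _
  have hsum_Icc : ∑ j ∈ Icc 1 N, a j * L j = ∑ k ∈ range N, a (k + 1) * L (k + 1) := by
    rw [range_eq_Ico, sum_Ico_add' (fun j => a j * L j), zero_add, Ico_add_one_right_eq_Icc]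
  rw [hsum_Icc]
  exact tendsto_rpow_mul_tsum_of_tendsto_of_abs_le_mul_rpow N hκ hb hhead hterm

/-- Analytic core of the main theorem: with eigenvalue lower bounds
`l j ≥ c₀ j^{1/β}` (`l` nondecreasing), coefficient bounds `|a j| ≤ c₁ (l j)^β`,
tail limits `t^{κ₁} F_j(t) → L_j` for `j ≤ N` and uniform bounds
`F_j(t) ≤ c₂ (l j)^{-κ₀} t^{-κ₀}` for `j > N` (with `κ₀ > max(κ₁, 2β)`),
the series `∑_{j≥1} a_j F_j(t)` converges absolutely for each `t > 0` and
`t^{κ₁} ∑_{j≥1} a_j F_j(t) → ∑_{j=1}^N a_j L_j` as `t → ∞`. -/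
theorem stmt9
    (β c₀ c₁ c₂ κ₀ κ₁ : ℝ)
    (hβ : 0 < β) (hc₀ : 0 < c₀) (hc₁ : 0 < c₁) (hc₂ : 0 < c₂)
    (hκ₁ : 0 < κ₁) (hκ : κ₁ < κ₀) (hκβ : 2 * β < κ₀)
    (l : ℕ → ℝ) (hmono : ∀ j : ℕ, 1 ≤ j → l j ≤ l (j + 1))
    (hlb : ∀ j : ℕ, 1 ≤ j → c₀ * (j : ℝ) ^ (1 / β) ≤ l j)
    (a : ℕ → ℝ) (ha : ∀ j : ℕ, 1 ≤ j → |a j| ≤ c₁ * l j ^ β)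
    (F : ℕ → ℝ → ℝ) (hF : ∀ j : ℕ, 1 ≤ j → ∀ t : ℝ, 0 < t → 0 ≤ F j t)
    (N : ℕ) (hN : 1 ≤ N)
    (L : ℕ → ℝ) (hL : ∀ j : ℕ, 1 ≤ j → j ≤ N → 0 ≤ L j)
    (hlim : ∀ j : ℕ, 1 ≤ j → j ≤ N →
      Tendsto (fun t : ℝ => t ^ κ₁ * F j t) atTop (nhds (L j)))
    (htail : ∀ j : ℕ, N < j → ∀ t : ℝ, 0 < t → F j t ≤ c₂ * l j ^ (-κ₀) * t ^ (-κ₀)) :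
    (∀ t : ℝ, 0 < t → Summable (fun j : ℕ => |a (j + 1) * F (j + 1) t|)) ∧
    Tendsto (fun t : ℝ => t ^ κ₁ * ∑' j : ℕ, a (j + 1) * F (j + 1) t)
      atTop (nhds (∑ j ∈ Finset.Icc 1 N, a j * L j)) :=
  stmt9_general β c₀ c₁ c₂ κ₀ κ₁ hβ hc₀ hκ hκβ l hlb a ha F hF N L hlim htail
end
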